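/- For every positive integer s, the Dirichlet convolution (φ * X)(s) = ∑_{d|s} φ(d) X(s/d) satisfies (φ*X)(s) ≤ s^{2n−1}, where X(q) = q^{2m+1} ∏_{p|q}(1 − p^{−2m}) and m = n−1 ≥ 1. -/

import Mathlib

/-!
Write `X(n) = n · J_{2m}(n)`, where `J_k(n) = n^k ∏_{p ∣ n} (1 - p^{-k})` is Jordan's totient.
Since `φ * ζ = id`, `J_k * ζ = id^k`, and multiplying pointwise by the completely multiplicative
`id` commutes with Dirichlet convolution,
`(φ * X) * ζ = id * (id · J_{2m}) = id · (ζ * J_{2m}) = id^{2m+1}`,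
that is `∑_{d ∣ s} (φ * X)(d) = s^{2m+1}`. All terms are nonnegative, so the term `d = s` is at
most `s^{2m+1}`.
-/

/-- The multiplicative function `X(q) = q^{2m+1} ∏_{p ∣ q} (1 - p^{-2m})`, with `m = n-1`. -/
noncomputable def Xfun (m s : ℕ) : ℝ :=
  (s : ℝ) ^ (2 * m + 1) * ∏ p ∈ s.primeFactors, (1 - (p : ℝ) ^ (-(2 * (m : ℤ))))

/-- The Dirichlet convolution `(φ * X)(s) = ∑_{d ∣ s} φ(d) X(s/d)`. -/
noncomputable def phiX (m s : ℕ) : ℝ :=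
  ∑ d ∈ s.divisors, (Nat.totient d : ℝ) * Xfun m (s / d)

open scoped ArithmeticFunction.zeta

namespace ArithmeticFunction

theorem pmul_id_mul_pmul_id {R : Type*} [CommSemiring R] (f g : ArithmeticFunction R) :
    pmul (ArithmeticFunction.id : ArithmeticFunction R) f *
        pmul (ArithmeticFunction.id : ArithmeticFunction R) g =
      pmul (ArithmeticFunction.id : ArithmeticFunction R) (f * g) := by
  ext n
  simp only [mul_apply, pmul_apply, natCoe_apply, id_apply, Finset.mul_sum]
  refine Finset.sum_congr rfl fun x hx => ?_
  rw [← (Nat.mem_divisorsAntidiagonal.1 hx).1]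
  push_cast
  ring

def totient : ArithmeticFunction ℕ := ⟨Nat.totient, Nat.totient_zero⟩

theorem totient_apply (n : ℕ) : totient n = n.totient := rfl

theorem coe_totient_mul_coe_zeta {R : Type*} [Semiring R] :
    (totient : ArithmeticFunction R) * ζ = (ArithmeticFunction.id : ArithmeticFunction R) := by
  ext n
  simp only [coe_mul_zeta_apply, natCoe_apply, totient_apply, id_apply]
  rw [← Nat.cast_sum, Nat.sum_totient]

section Jordan

variable (K : Type*) [Field K]

noncomputable def jordanTotient (k : ℕ) : ArithmeticFunction K :=
  pmul ↑(pow k) (prodPrimeFactors fun p => 1 - ((p : K) ^ k)⁻¹)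

variable {K}

theorem jordanTotient_apply {k n : ℕ} (hn : n ≠ 0) :
    jordanTotient K k n = (n : K) ^ k * ∏ p ∈ n.primeFactors, (1 - ((p : K) ^ k)⁻¹) := by
  simp [jordanTotient, pow_apply, hn]

theorem isMultiplicative_jordanTotient (k : ℕ) : (jordanTotient K k).IsMultiplicative :=
  isMultiplicative_pow.natCast.pmul (.prodPrimeFactors _)

theorem jordanTotient_prime_pow_succ [CharZero K] {p : ℕ} (hp : p.Prime) (k j : ℕ) :
    jordanTotient K k (p ^ (j + 1)) = ((p : K) ^ k) ^ (j + 1) - ((p : K) ^ k) ^ j := by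
  have hpk : (p : K) ^ k ≠ 0 := pow_ne_zero _ (Nat.cast_ne_zero.2 hp.ne_zero)
  rw [jordanTotient_apply (pow_ne_zero _ hp.ne_zero), Nat.primeFactors_prime_pow j.succ_ne_zero hp,
    Finset.prod_singleton, Nat.cast_pow, ← pow_mul, mul_comm, pow_mul]
  field_simp
  ring

theorem coe_zeta_mul_jordanTotient [CharZero K] (k : ℕ) :
    (ζ * jordanTotient K k : ArithmeticFunction K) = pow k := by
  refine (IsMultiplicative.eq_iff_eq_on_prime_powers _ (isMultiplicative_zeta.natCast.mul
    (isMultiplicative_jordanTotient k)) _ isMultiplicative_pow.natCast).2 fun p r hp => ?_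
  rw [coe_zeta_mul_apply, Nat.sum_divisors_prime_pow hp, Finset.sum_range_succ']
  simp only [jordanTotient_prime_pow_succ hp, Finset.sum_range_sub, pow_zero,
    (isMultiplicative_jordanTotient k).map_one, natCoe_apply, pow_apply]
  simp [hp.ne_zero, ← pow_mul, mul_comm]

end Jordan

end ArithmeticFunction

open ArithmeticFunction

theorem Xfun_eq_pmul_id_jordanTotient (m n : ℕ) :
    Xfun m n =
      pmul (ArithmeticFunction.id : ArithmeticFunction ℝ) (jordanTotient ℝ (2 * m)) n := by
  rcases eq_or_ne n 0 with rfl | hn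
  · simp [Xfun]
  have hzpow (p : ℕ) : (p : ℝ) ^ (-(2 * (m : ℤ))) = ((p : ℝ) ^ (2 * m))⁻¹ := by
    rw [zpow_neg]
    norm_cast
  rw [pmul_apply, natCoe_apply, id_apply, jordanTotient_apply hn, Xfun]
  simp only [hzpow]
  ring

theorem phiX_eq_totient_mul_apply (m s : ℕ) :
    phiX m s = ((totient : ArithmeticFunction ℝ) *
      pmul (ArithmeticFunction.id : ArithmeticFunction ℝ) (jordanTotient ℝ (2 * m))) s := by
  rw [mul_apply, Nat.sum_divisorsAntidiagonal (fun a b => (totient : ArithmeticFunction ℝ) a *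
    pmul (ArithmeticFunction.id : ArithmeticFunction ℝ) (jordanTotient ℝ (2 * m)) b)]
  simp only [phiX, Xfun_eq_pmul_id_jordanTotient, natCoe_apply, totient_apply]

theorem sum_divisors_phiX (m : ℕ) {s : ℕ} (hs : s ≠ 0) :
    ∑ d ∈ s.divisors, phiX m d = (s : ℝ) ^ (2 * m + 1) := by
  simp only [phiX_eq_totient_mul_apply]
  rw [← coe_mul_zeta_apply, mul_right_comm, coe_totient_mul_coe_zeta]
  nth_rw 1 [← pmul_zeta (ArithmeticFunction.id : ArithmeticFunction ℝ)]
  rw [pmul_id_mul_pmul_id, coe_zeta_mul_jordanTotient, pmul_apply, natCoe_apply, natCoe_apply,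
    id_apply, pow_apply, if_neg (by omega), Nat.cast_pow, pow_succ']

theorem Xfun_nonneg (m n : ℕ) : 0 ≤ Xfun m n := by
  refine mul_nonneg (by positivity) (Finset.prod_nonneg fun p hp => sub_nonneg.2 ?_)
  exact zpow_le_one_of_nonpos₀ (Nat.one_le_cast.2 (Nat.pos_of_mem_primeFactors hp)) (by omega)

theorem phiX_nonneg (m s : ℕ) : 0 ≤ phiX m s :=
  Finset.sum_nonneg fun _ _ => mul_nonneg (Nat.cast_nonneg _) (Xfun_nonneg m _)

theorem phiX_le_general (n : ℕ) (hn : 2 ≤ n) (s : ℕ) :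
    phiX (n - 1) s ≤ (s : ℝ) ^ (2 * n - 1) := by
  rcases eq_or_ne s 0 with rfl | hs
  · simp only [phiX, Nat.divisors_zero, Finset.sum_empty]
    positivity
  calc phiX (n - 1) s ≤ ∑ d ∈ s.divisors, phiX (n - 1) d :=
        Finset.single_le_sum (fun d _ => phiX_nonneg _ d) (Nat.mem_divisors_self s hs)
    _ = (s : ℝ) ^ (2 * n - 1) := by
        rw [sum_divisors_phiX _ hs]
        congr 1
        omega

/-- For every positive integer `s`, `(φ * X)(s) ≤ s^{2n-1}`,
where `m = n - 1 ≥ 1`. -/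
theorem phiX_le (n : ℕ) (hn : 2 ≤ n) (s : ℕ) (hs : 1 ≤ s) :
    phiX (n - 1) s ≤ (s : ℝ) ^ (2 * n - 1) :=
  phiX_le_general n hn s
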